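/- Let A be a calibrated R-superalgebra, n ≥ 1, and e ∈ 𝔞 an idempotent such that be ∈ {b, 0} for every b ∈ B^A. Calibrate the left M_n(A)-supermodule Col_n(Ae) of column vectors with entries in Ae by Col_n(Ae)_𝔞 = Col_n(𝔞e) and Col_n(Ae)_𝔠 = Col_n(𝔠e). Then there is an isomorphism of left T^A(n,d)_R-supermodules Γ̃^d(Col_n(Ae)) ≅ T^A(n,d)_R · η^{e^d}_{1^d,1^d}, where η^{e^d}_{1^d,1^d} = (ξ^e_{1,1})^{⊗d} is the idempotent of T^A(n,d)_R corresponding to the constant tuple with entry the matrix unit ξ^e_{1,1}. -/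

import Mathlib

open scoped BigOperators
open Finsupp

set_option maxHeartbeats 1000000

namespace Paper

noncomputable section

variable (K : Type) [CommRing K]

/-- Coordinate model for the `d`-th tensor power `V^{⊗ d}` of a free module `V`
with basis indexed by `β`: the basis of `V^{⊗ d}` is indexed by `d`-tuples in `β`. -/
abbrev TPow (β : Type) (d : ℕ) : Type := (Fin d → β) →₀ K

variable {β : Type} [Fintype β] [DecidableEq β]

/-- The tensor product `v 0 ⊗ v 1 ⊗ ⋯ ⊗ v (d-1)` of vectors written in coordinates. -/
def tensorOf {d : ℕ} (v : Fin d → (β →₀ K)) : TPow K β d :=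
  ∑ k ∈ Fintype.piFinset (fun i => (v i).support),
    (∏ i, (v i) (k i)) • Finsupp.single k (1 : K)

/-- parity of a `Fin 3`-valued part marker: `0 = 𝔞`, `1 = 𝔠` (both even), `2 = odd`. -/
def par2 (x : Fin 3) : ZMod 2 := if x = 2 then 1 else 0

/-- total parity of a basis tuple -/
def tupleParity (p : β → Fin 3) {d : ℕ} (k : Fin d → β) : ZMod 2 := ∑ i, par2 (p (k i))

/-- the even part of the tensor power (span of basis tuples of even total parity) -/
def evenPart (p : β → Fin 3) (d : ℕ) : Submodule K (TPow K β d) :=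
  Finsupp.supported K K {k | tupleParity p k = 0}

/-- the odd part of the tensor power -/
def oddPart (p : β → Fin 3) (d : ℕ) : Submodule K (TPow K β d) :=
  Finsupp.supported K K {k | tupleParity p k = 1}

/-- the sign count `⟨σ; v⟩` for the signed place-permutation action -/
def permSign (p : β → Fin 3) {d : ℕ} (σ : Equiv.Perm (Fin d)) (k : Fin d → β) : ℕ :=
  (Finset.univ.filter fun q : Fin d × Fin d =>
     q.1 < q.2 ∧ σ⁻¹ q.2 < σ⁻¹ q.1 ∧ p (k q.1) = 2 ∧ p (k q.2) = 2).card

/-- the signed place-permutation action of `σ ∈ S_d` on `V^{⊗ d}` -/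
def permAct (p : β → Fin 3) {d : ℕ} (σ : Equiv.Perm (Fin d)) :
    TPow K β d →ₗ[K] TPow K β d :=
  Finsupp.lsum K fun k => LinearMap.toSpanSingleton K _
    (((-1 : K) ^ permSign p σ k) • Finsupp.single (k ∘ σ) (1 : K))

/-- the divided power `Γ^d V`: invariants of the signed place-permutation action -/
def Gamma (p : β → Fin 3) (d : ℕ) : Submodule K (TPow K β d) :=
  ⨅ σ : Equiv.Perm (Fin d), LinearMap.eqLocus (permAct K p σ) LinearMap.id

/-- A calibrated family of vectors of the "supermodule" `β →₀ K`: an index set `ι`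
with a partition into `𝔞`- (`part = 0`), `𝔠`- (`part = 1`) and odd (`part = 2`) parts,
a total order (realized through an `ℕ`-encoding `ord`) and the actual vectors `vec`. -/
structure CalFamily (β : Type) : Type 1 where
  ι : Type
  fin : Fintype ι
  deq : DecidableEq ι
  part : ι → Fin 3
  ord : ι → ℕ
  vec : ι → (β →₀ K)

attribute [instance] CalFamily.fin CalFamily.deq

namespace CalFamily

variable {K}
variable (F : CalFamily K β)

/-- `Seq(B,d)`: tuples in which an entry may repeat only if it is even -/
def IsSeq {d : ℕ} (b : Fin d → F.ι) : Prop :=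
  ∀ i j : Fin d, i ≠ j → b i = b j → F.part (b i) ≠ 2

/-- the inversion count `⟨b⟩` among odd entries -/
def inversions {d : ℕ} (b : Fin d → F.ι) : ℕ :=
  (Finset.univ.filter fun q : Fin d × Fin d =>
    q.1 < q.2 ∧ F.part (b q.1) = 2 ∧ F.part (b q.2) = 2 ∧ F.ord (b q.2) < F.ord (b q.1)).card

/-- the `S_d`-orbit of a tuple -/
def orbit {d : ℕ} (b : Fin d → F.ι) : Finset (Fin d → F.ι) :=
  Finset.univ.filter fun b' => ∃ σ : Equiv.Perm (Fin d), b' = b ∘ σ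

/-- the element `x_b ∈ Γ^d V` -/
def x {d : ℕ} (b : Fin d → F.ι) : TPow K β d :=
  ∑ b' ∈ F.orbit b,
    ((-1 : K) ^ (F.inversions b + F.inversions b')) • tensorOf K (fun i => F.vec (b' i))

/-- the factorial `[b]^!_𝔠` -/
def mfac {d : ℕ} (b : Fin d → F.ι) : ℕ :=
  ∏ c ∈ Finset.univ.filter (fun c : F.ι => F.part c = 1),
    (Finset.univ.filter fun i : Fin d => b i = c).card.factorial

/-- the element `y_b = [b]^!_𝔠 • x_b` -/
def y {d : ℕ} (b : Fin d → F.ι) : TPow K β d := F.mfac b • F.x b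

end CalFamily

/-- the modified divided power `Γ̃^d V`, as a submodule of the coordinate tensor power -/
def gammaTilde (F : CalFamily K β) (d : ℕ) : Submodule K (TPow K β d) :=
  Submodule.span K {w | ∃ b : Fin d → F.ι, F.IsSeq b ∧ w = F.y b}

/-- the standard calibrated family: the basis of `β →₀ K` given by `β` itself -/
def stdFam (p : β → Fin 3) (ord : β → ℕ) : CalFamily K β :=
  ⟨β, inferInstance, inferInstance, p, ord, fun b => Finsupp.single b 1⟩

/-- the Koszul sign `⟨a, v⟩ = #{(k,l) | k > l, a_k odd, v_l odd}` -/
def koszul {α : Type} (pA : α → Fin 3) (pV : β → Fin 3) {d : ℕ}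
    (a : Fin d → α) (k : Fin d → β) : ℕ :=
  (Finset.univ.filter fun q : Fin d × Fin d =>
    q.2 < q.1 ∧ pA (a q.1) = 2 ∧ pV (k q.2) = 2).card

/-- the (left) action of an element `x` of the `d`-th tensor power of a superalgebra `A`
(with basis `α` and structure constants `act`) on the `d`-th tensor power of a
supermodule with basis `β`, including Koszul signs. -/
def kact {α : Type} [Fintype α] [DecidableEq α]
    (pA : α → Fin 3) (pV : β → Fin 3) (act : α → β → (β →₀ K)) {d : ℕ}
    (x : TPow K α d) : TPow K β d →ₗ[K] TPow K β d :=
  Finsupp.lsum K fun k => LinearMap.toSpanSingleton K _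
    (x.sum fun a r => (r * (-1 : K) ^ koszul pA pV a k) • tensorOf K (fun i => act (a i) (k i)))

/-- the right action analogue of `kact` (for right supermodules), `v ↦ v · x` -/
def rkact {α : Type} [Fintype α] [DecidableEq α]
    (pA : α → Fin 3) (pV : β → Fin 3) (ract : β → α → (β →₀ K)) {d : ℕ}
    (x : TPow K α d) : TPow K β d →ₗ[K] TPow K β d :=
  Finsupp.lsum K fun k => LinearMap.toSpanSingleton K _
    (x.sum fun a r => (r * (-1 : K) ^ koszul pV pA k a) • tensorOf K (fun i => ract (k i) (a i)))

/-- shortest coset representatives for `(S_c × S_e) \ S_{c+e}` -/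
def shuffles (c e : ℕ) : Finset (Equiv.Perm (Fin (c + e))) :=
  Finset.univ.filter fun σ =>
    (∀ i j : Fin (c + e), (i : ℕ) < c → (j : ℕ) < c → i < j → σ⁻¹ i < σ⁻¹ j) ∧
    (∀ i j : Fin (c + e), c ≤ (i : ℕ) → c ≤ (j : ℕ) → i < j → σ⁻¹ i < σ⁻¹ j)

/-- the outer (concatenation) product `V^{⊗c} ⊗ V^{⊗e} → V^{⊗(c+e)}`, as a bilinear map -/
def outerL (c e : ℕ) : TPow K β c →ₗ[K] TPow K β e →ₗ[K] TPow K β (c + e) :=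
  Finsupp.lsum K fun k1 => LinearMap.toSpanSingleton K _
    (Finsupp.lsum K fun k2 => LinearMap.toSpanSingleton K _
      (Finsupp.single (Fin.append k1 k2) (1 : K)))

/-- the star product `w1 * w2 = Σ_σ (w1 ⊗ w2)^σ` over shortest coset representatives -/
def starL (p : β → Fin 3) (c e : ℕ) : TPow K β c →ₗ[K] TPow K β e →ₗ[K] TPow K β (c + e) :=
  ∑ σ ∈ shuffles c e, (outerL K c e).compr₂ (permAct K p σ)

/-- cast of a coordinate tensor power along an equality of tensor degrees -/
def castTPow {c d : ℕ} (h : c = d) : TPow K β c →ₗ[K] TPow K β d :=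
  Finsupp.lmapDomain K K (fun k => k ∘ (Fin.cast h.symm))

/-- embedding of coordinates along a map of basis index sets -/
def embTPow {γ : Type} (f : β → γ) (d : ℕ) : TPow K β d →ₗ[K] TPow K γ d :=
  Finsupp.lmapDomain K K (fun k => f ∘ k)

end

end Paper
namespace Paper

noncomputable section

variable (K : Type) [CommRing K]

/-- the index of the `q`-th position of the `p`-th block (blocks ordered via `ow`,
with sizes `c`) inside `Fin d`, `d = Σ c` -/
def blockIdx {ι : Type} [Fintype ι] [DecidableEq ι] (ow : ι → ℕ) (c : ι → ℕ) {d : ℕ}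
    (hd : ∑ p, c p = d) (p : ι) (q : Fin (c p)) : Fin d :=
  ⟨(∑ p' ∈ Finset.univ.filter (fun p' => ow p' < ow p), c p') + (q : ℕ), by
    have hq := q.2
    have hsub : (Finset.univ.filter (fun p' => ow p' < ow p)) ⊆ Finset.univ.erase p := by
      intro x hx
      rcases Finset.mem_filter.mp hx with ⟨_, hlt⟩
      exact Finset.mem_erase.mpr ⟨by intro hxp; rw [hxp] at hlt; exact lt_irrefl _ hlt, Finset.mem_univ x⟩
    have h1 : (∑ p' ∈ Finset.univ.filter (fun p' => ow p' < ow p), c p')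
        ≤ ∑ p' ∈ Finset.univ.erase p, c p' :=
      Finset.sum_le_sum_of_subset hsub
    have h2 := Finset.sum_erase_add Finset.univ c (Finset.mem_univ p)
    omega⟩

/-- iterated outer (concatenation) product of a finite family of tensors,
concatenated in the order given by `ow` -/
def bigOuter {β : Type} [Fintype β] [DecidableEq β] {ι : Type} [Fintype ι] [DecidableEq ι]
    (ow : ι → ℕ) (c : ι → ℕ) {d : ℕ}
    (hd : ∑ p, c p = d) (v : ∀ p : ι, TPow K β (c p)) : TPow K β d :=
  ∑ k : Fin d → β, (∏ p, (v p) (fun q => k (blockIdx ow c hd p q))) • Finsupp.single k (1 : K)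

end

end Paper
namespace Paper

noncomputable section

variable (K : Type) [CommRing K]

/-- bilinear extension of structure constants `f` to the spanned free modules -/
def pairExt {α β γ : Type} (f : α → β → (γ →₀ K)) (x : α →₀ K) (y : β →₀ K) : γ →₀ K :=
  x.sum fun a r => y.sum fun b s => (r * s) • f a b

/-- linear extension of a basis-valued map -/
def oneExt {α γ : Type} (f : α → (γ →₀ K)) (x : α →₀ K) : γ →₀ K :=
  x.sum fun a r => r • f a

variable {β : Type} [Fintype β] [DecidableEq β]

/-- the bilinear form on `β →₀ K` with Gram matrix `G` -/
def formV (G : β → β → K) : (β →₀ K) →ₗ[K] (β →₀ K) →ₗ[K] K :=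
  Finsupp.lsum K fun b => LinearMap.toSpanSingleton K _
    (Finsupp.lsum K fun b' => LinearMap.toSpanSingleton K K (G b b'))

/-- the induced (signed) bilinear form `(·,·)_d` on the `d`-th tensor power -/
def formD (p : β → Fin 3) (G : β → β → K) (d : ℕ) :
    TPow K β d →ₗ[K] TPow K β d →ₗ[K] K :=
  Finsupp.lsum K fun k => LinearMap.toSpanSingleton K _
    (Finsupp.lsum K fun k' => LinearMap.toSpanSingleton K K
      (((-1 : K) ^ koszul p p k k') * ∏ i, G (k i) (k' i)))

end

end Paper
open Classical

namespace Paper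

noncomputable section

/-! ## Combinatorics of multipartitions -/

section Comb

variable (ℓ n : ℕ)

/-- `I`-multicompositions with at most `n` parts, `I = {0,…,ℓ}` -/
abbrev MultiComp := Fin (ℓ+1) → Fin n → ℕ

variable {ℓ n}

def mcSize (μ : MultiComp ℓ n) : ℕ := ∑ i, ∑ r, μ i r

def IsMultiPartition (μ : MultiComp ℓ n) : Prop := ∀ i, Antitone (μ i)

def norms (μ : MultiComp ℓ n) : Fin (ℓ+1) → ℕ := fun i => ∑ r, μ i r

/-- dominance order on compositions -/
def Dominates (lam mu : Fin n → ℕ) : Prop :=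
  ∀ s : Fin n, ∑ r ∈ Finset.univ.filter (· ≤ s), lam r ≤ ∑ r ∈ Finset.univ.filter (· ≤ s), mu r

/-- the order `⊴_I` on `ℤ_{≥0}^I` determined by a partial order `po` on `I` -/
def domI (po : Fin (ℓ+1) → Fin (ℓ+1) → Prop) (a b : Fin (ℓ+1) → ℕ) : Prop :=
  ∀ i, ∑ j ∈ Finset.univ.filter (fun j => po i j), a j ≤
       ∑ j ∈ Finset.univ.filter (fun j => po i j), b j

/-- the order `≤_I` on multicompositions -/
def leI (po : Fin (ℓ+1) → Fin (ℓ+1) → Prop) (lam mu : MultiComp ℓ n) : Prop :=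
  (domI po (norms lam) (norms mu) ∧ norms lam ≠ norms mu) ∨
  (norms lam = norms mu ∧ ∀ i, Dominates (lam i) (mu i))

/-- `ι_i(λ)`: the multicomposition concentrated in component `i` -/
def iotaP (i : Fin (ℓ+1)) (lam : Fin n → ℕ) : MultiComp ℓ n :=
  fun i' => if i' = i then lam else 0

/-- the one-row partition `(m)` -/
def rowP (n m : ℕ) : Fin n → ℕ := fun r => if (r : ℕ) = 0 then m else 0

/-- the one-column partition `(1^m)` -/
def colP (n m : ℕ) : Fin n → ℕ := fun r => if (r : ℕ) < m then 1 else 0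

/-- the conjugate partition -/
def conjP (lam : Fin n → ℕ) : Fin n → ℕ :=
  fun c => (Finset.univ.filter fun r => (c : ℕ) < lam r).card

/-- reversal of the components of a multicomposition -/
def revM (μ : MultiComp ℓ n) : MultiComp ℓ n := fun i => μ i.rev

/-- componentwise conjugate of a multipartition -/
def conjM (μ : MultiComp ℓ n) : MultiComp ℓ n := fun i => conjP (μ i)

/-- componentwise sum of multicompositions -/
def addM (lam mu : MultiComp ℓ n) : MultiComp ℓ n := fun i r => lam i r + mu i r

end Comb

/-! ## Filling tuples (used to construct the idempotents `η_μ`) -/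

def cumSum (c : ℕ → ℕ) (m : ℕ) : ℕ := ∑ m' ∈ Finset.range (m+1), c m'

def fillIdx (c : ℕ → ℕ) (k : ℕ) : ℕ :=
  if h : ∃ m, k < cumSum c m then Nat.find h else 0

def mcFun {ℓ n : ℕ} (μ : MultiComp ℓ n) : ℕ → ℕ := fun m =>
  if h : m < (ℓ+1) * n then
    μ (finProdFinEquiv.symm (⟨m, h⟩ : Fin ((ℓ+1) * n))).1
      (finProdFinEquiv.symm (⟨m, h⟩ : Fin ((ℓ+1) * n))).2
  else 0

def decodeIdx {ℓ n : ℕ} [NeZero n] (m : ℕ) : Fin (ℓ+1) × Fin n :=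
  if h : m < (ℓ+1) * n then finProdFinEquiv.symm ⟨m, h⟩ else ((0 : Fin (ℓ+1)), ⟨0, Nat.pos_of_ne_zero (NeZero.ne n)⟩)

/-- a tuple realizing the multicomposition `μ`, listing the pairs `(i,r)` with
multiplicities `μ i r` in the lexicographic order -/
def etaTuple {ℓ n : ℕ} [NeZero n] (μ : MultiComp ℓ n) (d : ℕ) :
    Fin d → Fin (ℓ+1) × Fin n :=
  fun k => decodeIdx (fillIdx (mcFun μ) k)

/-! ## Generalized Schur algebras presented by a calibrated basis with idempotents -/

/-- The data of a superalgebra `A` over `F` presented by a finite calibrated basis `βA`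
(with `part = 0/1/2` for `𝔞/𝔠/odd`), structure constants `mulA`, distinguished
standard idempotent basis elements `eA i` for `i ∈ I = {0,…,ℓ}`, and a partial
order `po` on `I` (refining nothing in particular here). -/
structure SchurAlgData (F : Type) [CommRing F] (ℓ : ℕ) : Type 1 where
  βA : Type
  finA : Fintype βA
  deqA : DecidableEq βA
  pA : βA → Fin 3
  ordA : βA → ℕ
  mulA : βA → βA → (βA →₀ F)
  eA : Fin (ℓ+1) → βA
  po : Fin (ℓ+1) → Fin (ℓ+1) → Prop

attribute [instance] SchurAlgData.finA SchurAlgData.deqA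

namespace SchurAlgData

variable {F : Type} [CommRing F] {ℓ : ℕ} (S : SchurAlgData F ℓ) (n d : ℕ)

/-- the basis of the matrix superalgebra `M_n(A)` -/
abbrev MBt := S.βA × Fin n × Fin n

def pM : S.MBt n → Fin 3 := fun m => S.pA m.1

def ordM : S.MBt n → ℕ := fun m => (S.ordA m.1 * n + (m.2.1 : ℕ)) * n + (m.2.2 : ℕ)

/-- structure constants of `M_n(A)`: `ξ^b_{rs} ξ^{b'}_{r's'} = δ_{s,r'} (b b')_{r,s'}` -/
def mulM : S.MBt n → S.MBt n → (S.MBt n →₀ F) := fun x y =>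
  if x.2.2 = y.2.1 then Finsupp.mapDomain (fun c => (c, x.2.1, y.2.2)) (S.mulA x.1 y.1)
  else 0

/-- the generalized Schur algebra `T^A(n,d) = Γ̃^d M_n(A)`, in coordinates -/
def alg : Submodule F (TPow F (S.MBt n) d) :=
  gammaTilde F (stdFam F (S.pM n) (S.ordM n)) d

/-- left multiplication by `x` in (the ambient space of) `T^A(n,d)` -/
def amul (x : TPow F (S.MBt n) d) : TPow F (S.MBt n) d →ₗ[F] TPow F (S.MBt n) d :=
  kact F (S.pM n) (S.pM n) (fun a b => S.mulM n a b) x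

/-- right multiplication by `x` (with the appropriate Koszul signs) -/
def ramul (x : TPow F (S.MBt n) d) : TPow F (S.MBt n) d →ₗ[F] TPow F (S.MBt n) d :=
  rkact F (S.pM n) (S.pM n) (fun b a => S.mulM n b a) x

/-- the set of even elements of the ambient space of `T^A(n,d)` -/
def evA : Set (TPow F (S.MBt n) d) := (evenPart F (S.pM n) d : Set _)

/-- the set of odd elements -/
def odA : Set (TPow F (S.MBt n) d) := (oddPart F (S.pM n) d : Set _)

/-- the idempotent `η_μ = η^{e_0}_{μ^{(0)}} * ⋯ * η^{e_ℓ}_{μ^{(ℓ)}} ∈ T^A(n,d)` -/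
def eta [NeZero n] (μ : MultiComp ℓ n) : TPow F (S.MBt n) d :=
  (stdFam F (S.pM n) (S.ordM n)).y
    (fun k => (S.eA (etaTuple μ d k).1, (etaTuple μ d k).2, (etaTuple μ d k).2))

def lStable (N : Submodule F (TPow F (S.MBt n) d)) : Prop :=
  ∀ x ∈ S.alg n d, ∀ v ∈ N, S.amul n d x v ∈ N

def rStable (N : Submodule F (TPow F (S.MBt n) d)) : Prop :=
  ∀ x ∈ S.alg n d, ∀ v ∈ N, S.ramul n d x v ∈ N

/-- the left ideal of `T^A(n,d)` generated by a set -/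
def lIdeal (T : Set (TPow F (S.MBt n) d)) : Submodule F (TPow F (S.MBt n) d) :=
  sInf {N | T ⊆ N ∧ S.lStable n d N}

/-- the right ideal generated by a set -/
def rIdeal (T : Set (TPow F (S.MBt n) d)) : Submodule F (TPow F (S.MBt n) d) :=
  sInf {N | T ⊆ N ∧ S.rStable n d N}

/-- the two-sided ideal generated by a set -/
def tIdeal (T : Set (TPow F (S.MBt n) d)) : Submodule F (TPow F (S.MBt n) d) :=
  sInf {N | T ⊆ N ∧ S.lStable n d N ∧ S.rStable n d N}

/-- the idempotents `η_μ` for multipartitions `μ >_I λ` -/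
def hiSet [NeZero n] (lam : MultiComp ℓ n) : Set (TPow F (S.MBt n) d) :=
  {w | ∃ μ : MultiComp ℓ n, mcSize μ = d ∧ IsMultiPartition μ ∧
        leI S.po lam μ ∧ μ ≠ lam ∧ w = S.eta n d μ}

/-- the two-sided ideal `T^A(n,d)^{> λ}` -/
def idealHi [NeZero n] (lam : MultiComp ℓ n) : Submodule F (TPow F (S.MBt n) d) :=
  S.tIdeal n d (S.hiSet n d lam)

/-- the standard module `Δ(λ)` is the subquotient `D1 λ / D2 λ` of the regular module -/
def D1 [NeZero n] (lam : MultiComp ℓ n) : Submodule F (TPow F (S.MBt n) d) :=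
  S.lIdeal n d {S.eta n d lam}

def D2 [NeZero n] (lam : MultiComp ℓ n) : Submodule F (TPow F (S.MBt n) d) :=
  S.D1 n d lam ⊓ S.idealHi n d lam

/-- the right standard module `Δ^op(λ)` is the subquotient `R1 λ / R2 λ` -/
def R1 [NeZero n] (lam : MultiComp ℓ n) : Submodule F (TPow F (S.MBt n) d) :=
  S.rIdeal n d {S.eta n d lam}

def R2 [NeZero n] (lam : MultiComp ℓ n) : Submodule F (TPow F (S.MBt n) d) :=
  S.R1 n d lam ⊓ S.idealHi n d lam

end SchurAlgData

/-! ## Relational isomorphisms of subquotient supermodules -/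

/-- `SubQuotIso Ta evA odA aM aN evM odM evN odN Phi Plo Qhi Qlo ε` says that the
subquotient `Phi/Plo` (of an ambient module `M` on which the algebra elements act via
`aM`) is isomorphic, via a supermodule isomorphism of parity `ε`, to the subquotient
`Qhi/Qlo` (with action `aN`). Over a field, an isomorphism of subquotients is always
induced by an ambient linear map, which is how it is encoded here. -/
def SubQuotIso {F : Type} [CommRing F] {A M N : Type}
    [AddCommGroup M] [Module F M] [AddCommGroup N] [Module F N]
    (Ta evA odA : Set A) (aM : A → M →ₗ[F] M) (aN : A → N →ₗ[F] N)
    (evM odM : Set M) (evN odN : Set N)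
    (Phi Plo : Submodule F M) (Qhi Qlo : Submodule F N) (ε : Bool) : Prop :=
  Plo ≤ Phi ∧ Qlo ≤ Qhi ∧
  ∃ f : M →ₗ[F] N,
    (∀ v ∈ Phi, f v ∈ Qhi) ∧ (∀ v ∈ Plo, f v ∈ Qlo) ∧
    (∀ w ∈ Qhi, ∃ v ∈ Phi, f v - w ∈ Qlo) ∧
    (∀ v ∈ Phi, f v ∈ Qlo → v ∈ Plo) ∧
    (∀ x ∈ Ta ∩ evA, ∀ v ∈ Phi, f (aM x v) - aN x (f v) ∈ Qlo) ∧
    (∀ x ∈ Ta ∩ odA, ∀ v ∈ Phi,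
       f (aM x v) - (if ε then (-1 : F) else 1) • aN x (f v) ∈ Qlo) ∧
    (∀ v ∈ Phi, v ∈ evM → ∃ w ∈ (if ε then odN else evN), f v - w ∈ Qlo) ∧
    (∀ v ∈ Phi, v ∈ odM → ∃ w ∈ (if ε then evN else odN), f v - w ∈ Qlo)

/-! ## Supermodules over `T^A(n,d)`, filtrations and tilting modules -/

/-- a supermodule over `T^A(n,d)` presented in coordinates: a basis `βV` with
parities `pV` and the structure constants `actV` of the action of `M_n(A)` -/
structure ModSetting {F : Type} [CommRing F] {ℓ : ℕ} (S : SchurAlgData F ℓ) (n : ℕ) :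
    Type 1 where
  βV : Type
  finV : Fintype βV
  deqV : DecidableEq βV
  pV : βV → Fin 3
  actV : S.MBt n → βV → (βV →₀ F)

attribute [instance] ModSetting.finV ModSetting.deqV

namespace ModSetting

variable {F : Type} [CommRing F] {ℓ : ℕ} {S : SchurAlgData F ℓ} {n : ℕ}
variable (MS : ModSetting S n) (d : ℕ)

/-- the action of elements of (the ambient space of) `T^A(n,d)` -/
def act (x : TPow F (S.MBt n) d) : TPow F MS.βV d →ₗ[F] TPow F MS.βV d :=
  kact F (S.pM n) MS.pV MS.actV x

def evM : Set (TPow F MS.βV d) := (evenPart F MS.pV d : Set _)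

def odM : Set (TPow F MS.βV d) := (oddPart F MS.pV d : Set _)

def stable (N : Submodule F (TPow F MS.βV d)) : Prop :=
  ∀ x ∈ S.alg n d, ∀ v ∈ N, MS.act d x v ∈ N

/-- the factor `Whi/Wlo` is isomorphic (as a supermodule, up to parity shift)
to the standard module `Δ(λ)` -/
def stdFactorAt [NeZero n] (Whi Wlo : Submodule F (TPow F MS.βV d))
    (lam : MultiComp ℓ n) : Prop :=
  ∃ ε : Bool,
    SubQuotIso (S.alg n d : Set _) (S.evA n d) (S.odA n d)
      (MS.act d) (fun x => S.amul n d x)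
      (MS.evM d) (MS.odM d) (S.evA n d) (S.odA n d)
      Whi Wlo (S.D1 n d lam) (S.D2 n d lam) ε

/-- the factor `Whi/Wlo` is isomorphic (as a supermodule, up to parity shift) to the
costandard module `∇(λ) = (Δ^op(λ))^*`; this is encoded by a perfect contravariant
pairing with the right standard module `Δ^op(λ) = R1 λ / R2 λ`. -/
def nablaFactorAt [NeZero n] (Whi Wlo : Submodule F (TPow F MS.βV d))
    (lam : MultiComp ℓ n) : Prop :=
  ∃ ε : Bool, ∃ B : TPow F MS.βV d →ₗ[F] TPow F (S.MBt n) d →ₗ[F] F,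
    (∀ v ∈ Wlo, ∀ w ∈ S.R1 n d lam, B v w = 0) ∧
    (∀ v ∈ Whi, ∀ w ∈ S.R2 n d lam, B v w = 0) ∧
    (∀ v ∈ Whi, (∀ w ∈ S.R1 n d lam, B v w = 0) → v ∈ Wlo) ∧
    (∀ w ∈ S.R1 n d lam, (∀ v ∈ Whi, B v w = 0) → w ∈ S.R2 n d lam) ∧
    (∀ v ∈ Whi, ∀ pv : Bool, v ∈ (if pv then MS.odM d else MS.evM d) →
      ∀ w ∈ S.R1 n d lam, ∀ pw : Bool, w ∈ (if pw then S.odA n d else S.evA n d) →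
        ((pv != pw) ≠ ε → B v w = 0)) ∧
    (∀ x ∈ (S.alg n d : Set _), ∀ px : Bool, x ∈ (if px then S.odA n d else S.evA n d) →
      ∀ v ∈ Whi, ∀ pv : Bool, v ∈ (if pv then MS.odM d else MS.evM d) →
      ∀ w ∈ S.R1 n d lam, ∀ pw : Bool, w ∈ (if pw then S.odA n d else S.evA n d) →
        B (MS.act d x v) w =
          (if px && (pv != pw) then (-1 : F) else 1) * B v (S.ramul n d x w))

/-- a standard filtration of `hi/lo` with all factors of the form `Δ(λ)`, `λ ∈ allowed` -/
def IsStdFiltBy [NeZero n] (lo hi : Submodule F (TPow F MS.βV d))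
    (allowed : Set (MultiComp ℓ n)) : Prop :=
  ∃ L : ℕ, ∃ W : Fin (L+1) → Submodule F (TPow F MS.βV d),
    Monotone W ∧ W 0 = lo ∧ W (Fin.last L) = hi ∧
    (∀ r, MS.stable d (W r)) ∧
    ∀ r : Fin L, ∃ lam, lam ∈ allowed ∧ mcSize lam = d ∧ IsMultiPartition lam ∧
      MS.stdFactorAt d (W r.succ) (W r.castSucc) lam

/-- a costandard filtration of `hi/lo` -/
def IsCoStdFilt [NeZero n] (lo hi : Submodule F (TPow F MS.βV d)) : Prop :=
  ∃ L : ℕ, ∃ W : Fin (L+1) → Submodule F (TPow F MS.βV d),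
    Monotone W ∧ W 0 = lo ∧ W (Fin.last L) = hi ∧
    (∀ r, MS.stable d (W r)) ∧
    ∀ r : Fin L, ∃ lam : MultiComp ℓ n, mcSize lam = d ∧ IsMultiPartition lam ∧
      MS.nablaFactorAt d (W r.succ) (W r.castSucc) lam

/-- tilting supermodule: admits both a standard and a costandard filtration -/
def IsTilting [NeZero n] (V : Submodule F (TPow F MS.βV d)) : Prop :=
  MS.IsStdFiltBy d ⊥ V Set.univ ∧ MS.IsCoStdFilt d ⊥ V

/-- indecomposability (as a supermodule) -/
def Indec (V : Submodule F (TPow F MS.βV d)) : Prop :=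
  ¬ ∃ U U' : Submodule F (TPow F MS.βV d),
      MS.stable d U ∧ MS.stable d U' ∧ U ⊓ U' = ⊥ ∧ U ⊔ U' = V ∧ U ≠ ⊥ ∧ U' ≠ ⊥

/-- `V` is (a copy of) the indecomposable tilting supermodule `T(λ)`:
it is tilting, indecomposable, contains a copy of `Δ(λ)` such that the quotient has
a standard filtration with factors `Δ(μ)`, `μ < λ`. -/
def IsIndecTilting [NeZero n] (lam : MultiComp ℓ n)
    (V : Submodule F (TPow F MS.βV d)) : Prop :=
  MS.IsTilting d V ∧ MS.Indec d V ∧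
  ∃ U : Submodule F (TPow F MS.βV d), U ≤ V ∧ MS.stable d U ∧
    MS.stdFactorAt d U ⊥ lam ∧
    MS.IsStdFiltBy d U V {μ | leI S.po μ lam ∧ μ ≠ lam}

/-- full tilting supermodule: tilting, and every indecomposable tilting supermodule
`T(λ)` occurs as a direct summand -/
def IsFullTilting [NeZero n] (V : Submodule F (TPow F MS.βV d)) : Prop :=
  MS.IsTilting d V ∧
  ∀ lam : MultiComp ℓ n, mcSize lam = d → IsMultiPartition lam →
    ∃ U U' : Submodule F (TPow F MS.βV d),
      MS.stable d U ∧ MS.stable d U' ∧ U ⊓ U' = ⊥ ∧ U ⊔ U' = V ∧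
      MS.IsIndecTilting d lam U

end ModSetting

end

end Paper
namespace Paper

noncomputable section

open Classical

variable (R : Type) [CommRing R]
variable {βA : Type} [Fintype βA] [DecidableEq βA]
variable (n : ℕ)

/-- the calibration of the matrix superalgebra `M_n(A)` -/
def pMn (pA : βA → Fin 3) : βA × Fin n × Fin n → Fin 3 := fun m => pA m.1

def ordMn (ordA : βA → ℕ) : βA × Fin n × Fin n → ℕ :=
  fun m => (ordA m.1 * n + (m.2.1 : ℕ)) * n + (m.2.2 : ℕ)

/-- structure constants of `M_n(A)` -/
def mulMn (mulA : βA → βA → (βA →₀ R)) :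
    βA × Fin n × Fin n → βA × Fin n × Fin n → ((βA × Fin n × Fin n) →₀ R) := fun x y =>
  if x.2.2 = y.2.1 then Finsupp.mapDomain (fun c => (c, x.2.1, y.2.2)) (mulA x.1 y.1)
  else 0

/-- structure constants of the column module `Col_n(A)` over `M_n(A)` -/
def colAct (mulA : βA → βA → (βA →₀ R)) :
    βA × Fin n × Fin n → βA × Fin n → ((βA × Fin n) →₀ R) := fun x c =>
  if x.2.2 = c.2 then Finsupp.mapDomain (fun b => (b, x.2.1)) (mulA x.1 c.1) else 0

/-- the calibrated family presenting `Col_n(Ae)` inside `Col_n(A)` -/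
def colFamE (pA : βA → Fin 3) (ordA : βA → ℕ) (mulA : βA → βA → (βA →₀ R)) (e : βA →₀ R) :
    CalFamily R (βA × Fin n) :=
  ⟨{b : βA // pairExt R mulA (Finsupp.single b 1) e = Finsupp.single b 1} × Fin n,
   inferInstance, inferInstance,
   fun q => pA q.1.1, fun q => ordA q.1.1 * n + (q.2 : ℕ),
   fun q => Finsupp.single (q.1.1, q.2) 1⟩

/-- the idempotent `η^{e^d}_{1^d,1^d} = (ξ^e_{1,1})^{⊗ d}` -/
def etaE [NeZero n] (e : βA →₀ R) (d : ℕ) : TPow R (βA × Fin n × Fin n) d :=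
  tensorOf R (fun _ : Fin d =>
    Finsupp.mapDomain (fun b => (b, (0 : Fin n), (0 : Fin n))) e)


/-!
The column embedding `ξ^b_r ↦ ξ^b_{r,1}` identifies `Col_n(A)` with the first column of `M_n(A)`,
compatibly with the left `M_n(A)`-action, the parity, the calibration and (after scaling by `n`)
the order of basis elements. Its `d`-th tensor power therefore maps `Γ̃^d Col_n(Ae)` isomorphically
onto the span of those `y_b ∈ T^A(n,d)` whose entries are matrix units `ξ^b_{r,1}` with `be = b`.
On the other side, `η^{e^d}_{1^d,1^d}` is a tensor power of the even element `ξ^e_{1,1}`, so right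
multiplication by it acts factorwise without signs; since `ξ^b_{r,s} ξ^e_{1,1}` is `ξ^b_{r,1}` when
`s = 1` and `be = b` and vanishes otherwise, it fixes exactly the `y_b` just described and kills
all other `y_b`. Both modules are thus the span of the same elements.
-/

section TensorCoordinates

variable {K : Type} [CommRing K] {β γ : Type}

theorem tensorOf_eq_sum_univ [Fintype β] {d : ℕ} (v : Fin d → (β →₀ K)) :
    tensorOf K v = ∑ k : Fin d → β, (∏ i, v i (k i)) • Finsupp.single k (1 : K) := by
  refine Finset.sum_subset (Finset.subset_univ _) fun k _ hk => ?_
  obtain ⟨i, hi⟩ := not_forall.mp (Fintype.mem_piFinset.not.mp hk)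
  exact smul_eq_zero_of_left (Finset.prod_eq_zero (f := fun i => v i (k i)) (Finset.mem_univ i)
    (Finsupp.notMem_support_iff.mp hi)) _

variable (K β) in
def tensorOfMultilinear [Fintype β] (d : ℕ) :
    MultilinearMap K (fun _ : Fin d => β →₀ K) (TPow K β d) :=
  ∑ k : Fin d → β,
    (LinearMap.toSpanSingleton K _ (Finsupp.single k (1 : K))).compMultilinearMap
      ((MultilinearMap.mkPiAlgebra K (Fin d) K).compLinearMap fun i => Finsupp.lapply (k i))

theorem tensorOfMultilinear_apply [Fintype β] {d : ℕ} (v : Fin d → (β →₀ K)) :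
    tensorOfMultilinear K β d v = tensorOf K v := by
  simp [tensorOfMultilinear, tensorOf_eq_sum_univ, LinearMap.toSpanSingleton_apply]

theorem tensorOf_eq_zero_of_eq_zero [Fintype β] {d : ℕ} {v : Fin d → (β →₀ K)} (i : Fin d)
    (hi : v i = 0) : tensorOf K v = 0 := by
  rw [← tensorOfMultilinear_apply]
  exact (tensorOfMultilinear K β d).map_coord_zero i hi

theorem tensorOf_single [Fintype β] {d : ℕ} (k : Fin d → β) :
    tensorOf K (fun i => Finsupp.single (k i) (1 : K)) = Finsupp.single k 1 := by
  rw [tensorOf_eq_sum_univ, Finset.sum_eq_single k]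
  · simp
  · intro k' _ hk'
    obtain ⟨i, hi⟩ := Function.ne_iff.mp hk'
    exact smul_eq_zero_of_left (Finset.prod_eq_zero
      (f := fun i => Finsupp.single (k i) (1 : K) (k' i)) (Finset.mem_univ i)
      (Finsupp.single_eq_of_ne hi)) _
  · exact fun h => absurd (Finset.mem_univ k) h

theorem tensorOf_ite_single [Fintype β] (S : Set β) {d : ℕ} (k : Fin d → β) :
    tensorOf K (fun i => if k i ∈ S then Finsupp.single (k i) (1 : K) else 0) =
      if ∀ i, k i ∈ S then Finsupp.single k 1 else 0 := by
  split_ifs with hk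
  · simp only [hk, if_true]
    exact tensorOf_single k
  · obtain ⟨i, hi⟩ := not_forall.mp hk
    exact tensorOf_eq_zero_of_eq_zero i (if_neg hi)

theorem tensorOf_sum_smul [Fintype γ] {d : ℕ} (v : Fin d → (β →₀ K))
    (w : Fin d → β → γ →₀ K) :
    tensorOf K (fun i => (v i).sum fun b r => r • w i b) =
      ∑ k ∈ Fintype.piFinset (fun i => (v i).support),
        (∏ i, v i (k i)) • tensorOf K (fun i => w i (k i)) := by
  rw [← tensorOfMultilinear_apply]
  simp only [Finsupp.sum]
  rw [MultilinearMap.map_sum_finset]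
  refine Finset.sum_congr rfl fun k _ => ?_
  rw [MultilinearMap.map_smul_univ, tensorOfMultilinear_apply]

theorem embTPow_single (f : β → γ) {d : ℕ} (k : Fin d → β) (c : K) :
    embTPow K f d (Finsupp.single k c) = Finsupp.single (f ∘ k) c :=
  Finsupp.mapDomain_single

theorem embTPow_tensorOf [Fintype γ] (f : β → γ) {d : ℕ} (v : Fin d → (β →₀ K)) :
    embTPow K f d (tensorOf K v) = tensorOf K (fun i => Finsupp.mapDomain f (v i)) := by
  have hmap : ∀ i, Finsupp.mapDomain f (v i) =
      (v i).sum fun b r => r • Finsupp.single (f b) 1 :=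
    fun i => Finsupp.sum_congr fun b _ => by rw [Finsupp.smul_single_one]
  simp only [hmap, tensorOf_sum_smul, tensorOf_single]
  rw [tensorOf, map_sum]
  exact Finset.sum_congr rfl fun k _ => by rw [map_smul, embTPow_single]; rfl

theorem embTPow_injective {f : β → γ} (hf : Function.Injective f) (d : ℕ) :
    Function.Injective (embTPow K f d) :=
  Finsupp.mapDomain_injective fun _ _ h => funext fun i => hf (congrFun h i)

theorem embTPow_mem_supported (f : β → γ) {p : β → Fin 3} {p' : γ → Fin 3}
    (hp : ∀ b, p' (f b) = p b) {d : ℕ} (c : ZMod 2) {v : TPow K β d}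
    (hv : v ∈ Finsupp.supported K K {k | tupleParity p k = c}) :
    embTPow K f d v ∈ Finsupp.supported K K {m | tupleParity p' m = c} := by
  have hmap := Finsupp.lmapDomain_supported K K (fun k : Fin d → β => f ∘ k) _ ▸
    Submodule.mem_map_of_mem hv
  refine Finsupp.supported_mono ?_ hmap
  rintro _ ⟨k, hk, rfl⟩
  simpa [tupleParity, hp] using hk

end TensorCoordinates

section TensorActions

variable {K : Type} [CommRing K] {α β γ : Type} [Fintype α] [DecidableEq α]

theorem kact_single (pA : α → Fin 3) (pV : β → Fin 3) (act : α → β → (β →₀ K)) {d : ℕ}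
    (x : TPow K α d) (k : Fin d → β) :
    kact K pA pV act x (Finsupp.single k 1) =
      x.sum fun a r =>
        (r * (-1 : K) ^ koszul pA pV a k) • tensorOf K (fun i => act (a i) (k i)) := by
  simp [kact, LinearMap.toSpanSingleton_apply]

theorem rkact_single (pA : α → Fin 3) (pV : β → Fin 3) (ract : β → α → (β →₀ K)) {d : ℕ}
    (x : TPow K α d) (k : Fin d → β) :
    rkact K pA pV ract x (Finsupp.single k 1) =
      x.sum fun a r =>
        (r * (-1 : K) ^ koszul pV pA k a) • tensorOf K (fun i => ract (k i) (a i)) := by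
  simp [rkact, LinearMap.toSpanSingleton_apply]

theorem embTPow_kact [Fintype γ] (f : β → γ) (pA : α → Fin 3) {pV : β → Fin 3}
    {pW : γ → Fin 3} (hp : ∀ b, pW (f b) = pV b) {actV : α → β → (β →₀ K)}
    {actW : α → γ → (γ →₀ K)} (hact : ∀ a b, actW a (f b) = Finsupp.mapDomain f (actV a b))
    {d : ℕ} (x : TPow K α d) (u : TPow K β d) :
    embTPow K f d (kact K pA pV actV x u) = kact K pA pW actW x (embTPow K f d u) := by
  suffices h : (embTPow K f d).comp (kact K pA pV actV x) =
      (kact K pA pW actW x).comp (embTPow K f d) from LinearMap.congr_fun h u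
  refine Finsupp.lhom_ext fun k r => ?_
  rw [← mul_one r, ← Finsupp.smul_single']
  simp only [LinearMap.comp_apply, map_smul]
  rw [embTPow_single, kact_single, kact_single, map_finsuppSum]
  congr 1
  refine Finsupp.sum_congr fun a _ => ?_
  have hkoszul : koszul pA pW a (f ∘ k) = koszul pA pV a k := by simp [koszul, hp]
  rw [map_smul, embTPow_tensorOf, hkoszul]
  simp only [Function.comp_apply, hact]

theorem rkact_tensorOf_single [Fintype β] (pA : α → Fin 3) (pV : β → Fin 3)
    (ract : β → α → (β →₀ K)) {d : ℕ} {v : Fin d → (α →₀ K)}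
    (hv : ∀ i, ∀ a ∈ (v i).support, pA a ≠ 2) (k : Fin d → β) :
    rkact K pA pV ract (tensorOf K v) (Finsupp.single k 1) =
      tensorOf K (fun i => (v i).sum fun a r => r • ract (k i) a) := by
  rw [rkact_single, tensorOf_sum_smul, tensorOf]
  simp only [Finsupp.smul_single_one]
  rw [← Finsupp.sum_finsetSum_index (fun _ => by simp) (fun _ _ _ => by rw [add_mul, add_smul])]
  refine Finset.sum_congr rfl fun a ha => ?_
  have hkoszul : koszul pV pA k a = 0 := by
    rw [koszul, Finset.card_eq_zero, Finset.filter_eq_empty_iff]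
    exact fun q _ hq => hv q.2 (a q.2) (Fintype.mem_piFinset.mp ha q.2) hq.2.2
  rw [Finsupp.sum_single_index (by simp), hkoszul, pow_zero, mul_one]

end TensorActions
namespace CalFamily

variable {K : Type} [CommRing K] {β γ : Type}

structure IsEmbedding (F : CalFamily K β) (G : CalFamily K γ) (f : β → γ) (g : F.ι → G.ι) :
    Prop where
  injective : Function.Injective g
  part_apply : ∀ x, G.part (g x) = F.part x
  ord_lt_ord_iff : ∀ x y, G.ord (g x) < G.ord (g y) ↔ F.ord x < F.ord y
  vec_apply : ∀ x, G.vec (g x) = Finsupp.mapDomain f (F.vec x)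

theorem mfac_eq_prod_image (F : CalFamily K β) {d : ℕ} (b : Fin d → F.ι) :
    F.mfac b = ∏ c ∈ (Finset.univ.image b).filter (fun c => F.part c = 1),
      (Finset.univ.filter fun i => b i = c).card.factorial := by
  refine (Finset.prod_subset (Finset.filter_subset_filter _ (Finset.subset_univ _))
    fun c hc hc' => ?_).symm
  have hempty : Finset.univ.filter (fun i => b i = c) = ∅ :=
    Finset.filter_eq_empty_iff.mpr fun i _ hi => hc' (Finset.mem_filter.mpr
      ⟨Finset.mem_image.mpr ⟨i, Finset.mem_univ i, hi⟩, (Finset.mem_filter.mp hc).2⟩)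
  rw [hempty, Finset.card_empty, Nat.factorial_zero]

theorem orbit_comp (F : CalFamily K β) (G : CalFamily K γ) (g : F.ι → G.ι) {d : ℕ}
    (b : Fin d → F.ι) :
    G.orbit (g ∘ b) = (F.orbit b).image (g ∘ ·) := by
  ext c
  simp only [orbit, Finset.mem_filter, Finset.mem_univ, true_and, Finset.mem_image]
  constructor
  · rintro ⟨σ, rfl⟩
    exact ⟨b ∘ σ, ⟨σ, rfl⟩, rfl⟩
  · rintro ⟨_, ⟨σ, rfl⟩, rfl⟩
    exact ⟨σ, rfl⟩

namespace IsEmbedding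

variable {F : CalFamily K β} {G : CalFamily K γ} {f : β → γ} {g : F.ι → G.ι}

theorem inversions_comp (h : F.IsEmbedding G f g) {d : ℕ} (b : Fin d → F.ι) :
    G.inversions (g ∘ b) = F.inversions b := by
  simp only [inversions, Function.comp_apply, h.part_apply, h.ord_lt_ord_iff]

theorem isSeq_comp_iff (h : F.IsEmbedding G f g) {d : ℕ} (b : Fin d → F.ι) :
    G.IsSeq (g ∘ b) ↔ F.IsSeq b := by
  simp only [IsSeq, Function.comp_apply, h.injective.eq_iff, h.part_apply]

theorem mfac_comp (h : F.IsEmbedding G f g) {d : ℕ} (b : Fin d → F.ι) :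
    G.mfac (g ∘ b) = F.mfac b := by
  rw [mfac_eq_prod_image, mfac_eq_prod_image, Finset.image_comp, Finset.filter_image,
    Finset.prod_image fun x _ y _ hxy => h.injective hxy]
  simp only [h.part_apply, Function.comp_apply, h.injective.eq_iff]

theorem x_comp [Fintype γ] (h : F.IsEmbedding G f g) {d : ℕ} (b : Fin d → F.ι) :
    embTPow K f d (F.x b) = G.x (g ∘ b) := by
  have hinj : Function.Injective fun b' : Fin d → F.ι => g ∘ b' :=
    fun _ _ hb' => funext fun i => h.injective (congrFun hb' i)
  rw [x, x, orbit_comp, Finset.sum_image fun _ _ _ _ hb' => hinj hb', map_sum]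
  refine Finset.sum_congr rfl fun b' _ => ?_
  rw [map_smul, embTPow_tensorOf, h.inversions_comp, h.inversions_comp]
  simp only [Function.comp_apply, h.vec_apply]

theorem y_comp [Fintype γ] (h : F.IsEmbedding G f g) {d : ℕ} (b : Fin d → F.ι) :
    embTPow K f d (F.y b) = G.y (g ∘ b) := by
  rw [y, y, map_nsmul, h.x_comp, h.mfac_comp]

theorem map_gammaTilde [Fintype γ] (h : F.IsEmbedding G f g) (d : ℕ) {S : Set G.ι}
    (hS : Set.range g = S) :
    (gammaTilde K F d).map (embTPow K f d) =
      Submodule.span K {w | ∃ c : Fin d → G.ι, G.IsSeq c ∧ (∀ i, c i ∈ S) ∧ w = G.y c} := by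
  subst hS
  rw [gammaTilde, Submodule.map_span]
  congr 1
  ext w
  constructor
  · rintro ⟨_, ⟨b, hb, rfl⟩, rfl⟩
    exact ⟨g ∘ b, (h.isSeq_comp_iff b).mpr hb, fun i => ⟨b i, rfl⟩, h.y_comp b⟩
  · rintro ⟨c, hc, hcg, rfl⟩
    choose b hb using hcg
    obtain rfl : g ∘ b = c := funext hb
    exact ⟨F.y b, ⟨b, (h.isSeq_comp_iff b).mp hc, rfl⟩, h.y_comp b⟩

end IsEmbedding

end CalFamily

section StandardFamily

variable {K : Type} [CommRing K] {β : Type} [Fintype β] [DecidableEq β]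
  (p : β → Fin 3) (ord : β → ℕ) {d : ℕ}

theorem map_stdFam_y {L : TPow K β d →ₗ[K] TPow K β d} {S : Set β}
    (hL : ∀ k, L (Finsupp.single k 1) = if ∀ i, k i ∈ S then Finsupp.single k 1 else 0)
    (b : Fin d → (stdFam K p ord).ι) :
    L ((stdFam K p ord).y b) = if ∀ i, b i ∈ S then (stdFam K p ord).y b else 0 := by
  have hterm : ∀ b' ∈ (stdFam K p ord).orbit b,
      L (tensorOf K fun i => (stdFam K p ord).vec (b' i)) =
        if ∀ i, b i ∈ S then tensorOf K fun i => (stdFam K p ord).vec (b' i) else 0 := by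
    intro b' hb'
    obtain ⟨σ, rfl⟩ := (Finset.mem_filter.mp hb').2
    have hvec : (tensorOf K fun i => (stdFam K p ord).vec ((b ∘ σ) i)) =
        Finsupp.single (b ∘ σ) 1 :=
      tensorOf_single _
    rw [hvec]
    refine (hL (b ∘ σ)).trans ?_
    have hperm : (∀ i, (b ∘ σ) i ∈ S) ↔ ∀ i, b i ∈ S :=
      σ.forall_congr_right (q := fun i => b i ∈ S)
    exact if_congr hperm rfl rfl
  rw [CalFamily.y, CalFamily.x, map_nsmul, map_sum]
  simp only [map_smul]
  rw [Finset.sum_congr rfl fun b' hb' => by rw [hterm b' hb']]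
  split_ifs <;> simp

theorem map_gammaTilde_stdFam {L : TPow K β d →ₗ[K] TPow K β d} {S : Set β}
    (hL : ∀ k, L (Finsupp.single k 1) = if ∀ i, k i ∈ S then Finsupp.single k 1 else 0) :
    (gammaTilde K (stdFam K p ord) d).map L =
      Submodule.span K {w | ∃ c : Fin d → (stdFam K p ord).ι,
        (stdFam K p ord).IsSeq c ∧ (∀ i, c i ∈ S) ∧ w = (stdFam K p ord).y c} := by
  rw [gammaTilde, Submodule.map_span]
  apply le_antisymm
  · rw [Submodule.span_le]
    rintro _ ⟨_, ⟨b, hb, rfl⟩, rfl⟩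
    rw [map_stdFam_y p ord hL]
    split_ifs with hS
    · exact Submodule.subset_span ⟨b, hb, hS, rfl⟩
    · exact Submodule.zero_mem _
  · refine Submodule.span_mono ?_
    rintro _ ⟨c, hc, hS, rfl⟩
    exact ⟨_, ⟨c, hc, rfl⟩, by rw [map_stdFam_y p ord hL, if_pos hS]⟩

end StandardFamily

section ColumnEmbedding

variable [NeZero n]

def colToMat {α : Type} : α × Fin n → α × Fin n × Fin n := fun c => (c.1, c.2, 0)

theorem colToMat_injective {α : Type} : Function.Injective (colToMat (α := α) n) := by
  intro c c' h
  simp only [colToMat, Prod.mk.injEq] at h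
  exact Prod.ext h.1 h.2.1

theorem mulMn_colToMat {α : Type} {mulA : α → α → (α →₀ R)} (x : α × Fin n × Fin n)
    (c : α × Fin n) :
    mulMn R n mulA x (colToMat n c) = Finsupp.mapDomain (colToMat n) (colAct R n mulA x c) := by
  by_cases h : x.2.2 = c.2
  · rw [mulMn, colAct, if_pos (show x.2.2 = (colToMat n c).2.1 from h), if_pos h,
      ← Finsupp.mapDomain_comp]
    rfl
  · rw [mulMn, colAct, if_neg (show ¬x.2.2 = (colToMat n c).2.1 from h), if_neg h,
      Finsupp.mapDomain_zero]

def colFamEToMat (pA : βA → Fin 3) (ordA : βA → ℕ) (mulA : βA → βA → (βA →₀ R)) (e : βA →₀ R)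
    (q : (colFamE R n pA ordA mulA e).ι) : βA × Fin n × Fin n :=
  (q.1.1, q.2, 0)

theorem colFamE_isEmbedding (pA : βA → Fin 3) (ordA : βA → ℕ) (mulA : βA → βA → (βA →₀ R))
    (e : βA →₀ R) :
    (colFamE R n pA ordA mulA e).IsEmbedding (stdFam R (pMn n pA) (ordMn n ordA))
      (colToMat n) (colFamEToMat R n pA ordA mulA e) where
  injective _ _ h := Prod.ext (Subtype.ext (congrArg Prod.fst h)) (congrArg (fun m => m.2.1) h)
  part_apply _ := rfl
  ord_lt_ord_iff x y := by
    simp only [stdFam, ordMn, colFamEToMat, colFamE, Fin.val_zero, add_zero]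
    exact Nat.mul_lt_mul_right (Nat.pos_of_ne_zero (NeZero.ne n))
  vec_apply q :=
    (Finsupp.mapDomain_single (f := colToMat n) (a := (q.1.1, q.2)) (b := (1 : R))).symm

/-- The labels of the matrix units `ξ^b_{r,1}` with `be = b`; the paper's column `1` is
`0 : Fin n`. -/
def colLabels (mulA : βA → βA → (βA →₀ R)) (e : βA →₀ R) : Set (βA × Fin n × Fin n) :=
  {m | m.2.2 = 0 ∧ pairExt R mulA (Finsupp.single m.1 1) e = Finsupp.single m.1 1}

theorem range_colFamEToMat (pA : βA → Fin 3) (ordA : βA → ℕ) (mulA : βA → βA → (βA →₀ R))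
    (e : βA →₀ R) :
    Set.range (colFamEToMat R n pA ordA mulA e) = colLabels R n mulA e := by
  ext m
  constructor
  · rintro ⟨q, rfl⟩
    exact ⟨rfl, q.1.2⟩
  · rintro ⟨hm, hbe⟩
    exact ⟨(⟨m.1, hbe⟩, m.2.1), Prod.ext rfl (Prod.ext rfl hm.symm)⟩

end ColumnEmbedding

section RightMulEta

variable [NeZero n]

theorem sum_smul_mulMn_of_col_eq_zero {α : Type} {mulA : α → α → (α →₀ R)} (e : α →₀ R)
    {m : α × Fin n × Fin n} (hm : m.2.2 = 0) :
    (e.sum fun b r => r • mulMn R n mulA m (b, 0, 0)) =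
      Finsupp.mapDomain (fun c => (c, m.2.1, 0)) (pairExt R mulA (Finsupp.single m.1 1) e) := by
  rw [pairExt, Finsupp.sum_single_index (by simp), Finsupp.mapDomain_sum]
  refine Finsupp.sum_congr fun b _ => ?_
  rw [one_mul, Finsupp.mapDomain_smul, mulMn,
    if_pos (show m.2.2 = (b, (0 : Fin n), (0 : Fin n)).2.1 from hm)]

theorem sum_smul_mulMn_xi_e {α : Type} {mulA : α → α → (α →₀ R)} {e : α →₀ R}
    (hbe : ∀ b : α, pairExt R mulA (Finsupp.single b 1) e = Finsupp.single b 1 ∨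
      pairExt R mulA (Finsupp.single b 1) e = 0) (m : α × Fin n × Fin n) :
    ((Finsupp.mapDomain (fun b => (b, (0 : Fin n), (0 : Fin n))) e).sum
        fun a r => r • mulMn R n mulA m a) =
      if m ∈ colLabels R n mulA e then Finsupp.single m 1 else 0 := by
  rw [Finsupp.sum_mapDomain_index (h := fun a r => r • mulMn R n mulA m a)
    (fun _ => zero_smul _ _) (fun _ _ _ => add_smul _ _ _)]
  by_cases hmem : m ∈ colLabels R n mulA e
  · rw [if_pos hmem, sum_smul_mulMn_of_col_eq_zero R n e hmem.1, hmem.2, Finsupp.mapDomain_single]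
    exact congrArg (Finsupp.single · 1) (Prod.ext rfl (Prod.ext rfl hmem.1.symm))
  rw [if_neg hmem]
  by_cases hm : m.2.2 = 0
  · rw [sum_smul_mulMn_of_col_eq_zero R n e hm, (hbe m.1).resolve_left fun h => hmem ⟨hm, h⟩,
      Finsupp.mapDomain_zero]
  · refine Finset.sum_eq_zero fun b _ => ?_
    dsimp only
    rw [mulMn, if_neg (show ¬m.2.2 = (b, (0 : Fin n), (0 : Fin n)).2.1 from hm), smul_zero]

theorem rkact_etaE_single {pA : βA → Fin 3} {mulA : βA → βA → (βA →₀ R)} {e : βA →₀ R}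
    (he : ∀ b ∈ e.support, pA b ≠ 2)
    (hbe : ∀ b : βA, pairExt R mulA (Finsupp.single b 1) e = Finsupp.single b 1 ∨
      pairExt R mulA (Finsupp.single b 1) e = 0) {d : ℕ} (k : Fin d → βA × Fin n × Fin n) :
    rkact R (pMn n pA) (pMn n pA) (fun v a => mulMn R n mulA v a) (etaE R n e d)
        (Finsupp.single k 1) =
      if ∀ i, k i ∈ colLabels R n mulA e then Finsupp.single k 1 else 0 := by
  have hxi : ∀ a ∈ (Finsupp.mapDomain (fun b => (b, (0 : Fin n), (0 : Fin n))) e).support,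
      pMn n pA a ≠ 2 := fun a ha => by
    obtain ⟨b, hb, rfl⟩ := Finset.mem_image.mp (Finsupp.mapDomain_support ha)
    exact he b hb
  rw [etaE, rkact_tensorOf_single _ _ _ fun _ => hxi]
  simp only [sum_smul_mulMn_xi_e R n hbe]
  exact tensorOf_ite_single _ k

end RightMulEta

theorem statement19
    [NeZero n] (d : ℕ)
    (pA : βA → Fin 3) (ordA : βA → ℕ) (mulA : βA → βA → (βA →₀ R))
    (e : βA →₀ R)
    (hea : e ∈ Finsupp.supported R R {b | pA b = 0})
    (hbe : ∀ b : βA, pairExt R mulA (Finsupp.single b 1) e = Finsupp.single b 1 ∨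
                     pairExt R mulA (Finsupp.single b 1) e = 0) :
    ∃ φ : ↥(gammaTilde R (colFamE R n pA ordA mulA e) d) ≃ₗ[R]
          ↥(Submodule.map
              (rkact R (pMn n pA) (pMn n pA) (fun v a => mulMn R n mulA v a) (etaE R n e d))
              (gammaTilde R (stdFam R (pMn n pA) (ordMn n ordA)) d)),
      (∀ x ∈ gammaTilde R (stdFam R (pMn n pA) (ordMn n ordA)) d,
        ∀ v w : ↥(gammaTilde R (colFamE R n pA ordA mulA e) d),
          (w : TPow R (βA × Fin n) d) =
              kact R (pMn n pA) (fun c => pA c.1) (colAct R n mulA) x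
                (v : TPow R (βA × Fin n) d) →
          ∀ v' w' : ↥(Submodule.map
              (rkact R (pMn n pA) (pMn n pA) (fun v a => mulMn R n mulA v a) (etaE R n e d))
              (gammaTilde R (stdFam R (pMn n pA) (ordMn n ordA)) d)),
            v' = φ v → w' = φ w →
            (w' : TPow R (βA × Fin n × Fin n) d) =
              kact R (pMn n pA) (pMn n pA) (mulMn R n mulA) x
                (v' : TPow R (βA × Fin n × Fin n) d)) ∧
      (∀ v : ↥(gammaTilde R (colFamE R n pA ordA mulA e) d),
        ((v : TPow R (βA × Fin n) d) ∈ evenPart R (fun c => pA c.1) d →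
          (φ v : TPow R (βA × Fin n × Fin n) d) ∈ evenPart R (pMn n pA) d) ∧
        ((v : TPow R (βA × Fin n) d) ∈ oddPart R (fun c => pA c.1) d →
          (φ v : TPow R (βA × Fin n × Fin n) d) ∈ oddPart R (pMn n pA) d)) := by
  have he : ∀ b ∈ e.support, pA b ≠ 2 := fun b hb => by simp [show pA b = 0 from hea hb]
  have hp : ∀ c, pMn n pA (colToMat n c) = pA c.1 := fun _ => rfl
  have himage : (gammaTilde R (colFamE R n pA ordA mulA e) d).map (embTPow R (colToMat n) d) =
      (gammaTilde R (stdFam R (pMn n pA) (ordMn n ordA)) d).map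
        (rkact R (pMn n pA) (pMn n pA) (fun v a => mulMn R n mulA v a) (etaE R n e d)) :=
    ((colFamE_isEmbedding R n pA ordA mulA e).map_gammaTilde d
      (range_colFamEToMat R n pA ordA mulA e)).trans
      (map_gammaTilde_stdFam _ _ (rkact_etaE_single R n he hbe)).symm
  refine ⟨(Submodule.equivMapOfInjective _ (embTPow_injective (colToMat_injective n) d) _).trans
    (LinearEquiv.ofEq _ _ himage), ?_, fun v => ⟨embTPow_mem_supported _ hp 0,
      embTPow_mem_supported _ hp 1⟩⟩
  rintro x - v w hw v' w' rfl rfl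
  show embTPow R (colToMat n) d w =
    kact R (pMn n pA) (pMn n pA) (mulMn R n mulA) x (embTPow R (colToMat n) d v)
  rw [hw]
  exact embTPow_kact _ _ hp (mulMn_colToMat R n) x v

end

end Paper
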